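/- Let P, Q be probability measures on a metric space with W(P, Q) ≤ μ̃, and suppose a set family of 'violation' events satisfies: the adversarial violation probability V_A = P{δ : ∃ δ' with d(δ, δ') ≤ R and δ' ∈ V} for a measurable set V. Then Q(V) ≤ V_A + μ̃/R. -/

import Mathlib

/-!
Take any coupling `π` of `P` and `Q`. A pair `(δ, δ')` with `δ' ∈ V` either has `d(δ, δ') ≤ R`,
and then `δ` lies in the `R`-fattening of `V`, or `d(δ, δ') > R`. The first kind has `π`-mass at
most `P(V^R)`, the second at most `∫ d dπ / R` by Markov's inequality; taking the infimum over
couplings gives `Q(V) ≤ P(V^R) + W(P, Q) / R`.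
-/

open MeasureTheory

/-- The `1`-Wasserstein distance between two measures on a metric space:
the infimum over couplings `π` of `∫ d(δ, δ') dπ` (in `ℝ≥0∞`). -/
noncomputable def wasserstein1 {Δ : Type*} [MeasurableSpace Δ] [PseudoMetricSpace Δ]
    (P Q : Measure Δ) : ENNReal :=
  ⨅ π ∈ {π : Measure (Δ × Δ) |
      IsProbabilityMeasure π ∧ π.map Prod.fst = P ∧ π.map Prod.snd = Q},
    ∫⁻ p, ENNReal.ofReal (dist p.1 p.2) ∂π

theorem MeasureTheory.Measure.map_snd_le_map_fst_add_lintegral_dist_div {Δ : Type*} [MeasurableSpace Δ]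
    [PseudoMetricSpace Δ] (π : Measure (Δ × Δ)) {V U : Set Δ} (hV : MeasurableSet V)
    (hU : MeasurableSet U) {R : ℝ} (hR : 0 < R)
    (hVU : ∀ x y, dist x y ≤ R → y ∈ V → x ∈ U) :
    π.map Prod.snd V ≤
      π.map Prod.fst U + (∫⁻ p, ENNReal.ofReal (dist p.1 p.2) ∂π) / ENNReal.ofReal R := by
  set far : Set (Δ × Δ) := Prod.snd ⁻¹' V \ Prod.fst ⁻¹' U
  have hfar : MeasurableSet far := (measurable_snd hV).diff (measurable_fst hU)
  have far_dist : ∀ p ∈ far, ENNReal.ofReal R ≤ ENNReal.ofReal (dist p.1 p.2) := by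
    rintro p ⟨hpV, hpU⟩
    exact ENNReal.ofReal_le_ofReal (not_le.mp fun h => hpU (hVU p.1 p.2 h hpV)).le
  -- Markov's inequality on `far` rather than on `{p | R < dist p.1 p.2}`, which need not be
  -- measurable when the σ-algebra is not Borel.
  have markov : π far ≤ (∫⁻ p, ENNReal.ofReal (dist p.1 p.2) ∂π) / ENNReal.ofReal R := by
    rw [ENNReal.le_div_iff_mul_le (by simp [hR]) (by simp), mul_comm, ← setLIntegral_const]
    exact (setLIntegral_mono' hfar far_dist).trans (setLIntegral_le_lintegral _ _)
  rw [Measure.map_apply measurable_snd hV, Measure.map_apply measurable_fst hU]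
  calc π (Prod.snd ⁻¹' V) ≤ π (Prod.fst ⁻¹' U ∪ far) := measure_mono fun p hp => by
        by_cases hpU : p.1 ∈ U
        · exact Or.inl hpU
        · exact Or.inr ⟨hp, hpU⟩
    _ ≤ π (Prod.fst ⁻¹' U) + π far := measure_union_le _ _
    _ ≤ _ := by gcongr

theorem le_add_wasserstein1_div {Δ : Type*} [MeasurableSpace Δ] [PseudoMetricSpace Δ]
    (P Q : Measure Δ) {V U : Set Δ} (hV : MeasurableSet V) (hU : MeasurableSet U) {R : ℝ}
    (hR : 0 < R) (hVU : ∀ x y, dist x y ≤ R → y ∈ V → x ∈ U) :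
    Q V ≤ P U + wasserstein1 P Q / ENNReal.ofReal R := by
  rw [← tsub_le_iff_left, ENNReal.le_div_iff_mul_le (by simp [hR]) (by simp)]
  refine le_iInf₂ fun π ⟨_, hπP, hπQ⟩ => ?_
  rw [← ENNReal.le_div_iff_mul_le (by simp [hR]) (by simp), tsub_le_iff_left, ← hπP, ← hπQ]
  exact Measure.map_snd_le_map_fst_add_lintegral_dist_div π hV hU hR hVU

theorem ood_violation_bound_general {Δ : Type*} [MeasurableSpace Δ]
    [MetricSpace Δ]
    (P Q : Measure Δ)
    (μt R : ℝ) (hR : 0 < R)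
    (hW : wasserstein1 P Q ≤ ENNReal.ofReal μt)
    (V : Set Δ) (hV : MeasurableSet V)
    (hVR : MeasurableSet {δ : Δ | ∃ δ', dist δ δ' ≤ R ∧ δ' ∈ V})
    (VA : ENNReal) (hVA : VA = P {δ : Δ | ∃ δ', dist δ δ' ≤ R ∧ δ' ∈ V}) :
    Q V ≤ VA + ENNReal.ofReal (μt / R) := by
  rw [hVA, ENNReal.ofReal_div_of_pos hR]
  calc Q V ≤ P {δ : Δ | ∃ δ', dist δ δ' ≤ R ∧ δ' ∈ V} + wasserstein1 P Q / ENNReal.ofReal R :=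
        le_add_wasserstein1_div P Q hV hVR hR fun x y hxy hy => ⟨y, hxy, hy⟩
    _ ≤ _ := by gcongr

/-- Out-of-distribution bound: if `W(P, Q) ≤ μ̃` and the adversarial violation
probability is `V_A = P{δ : ∃ δ', d(δ, δ') ≤ R ∧ δ' ∈ V}`, then
`Q(V) ≤ V_A + μ̃ / R`. -/
theorem ood_violation_bound {Δ : Type*} [MeasurableSpace Δ]
    [MetricSpace Δ] [BorelSpace Δ] [SecondCountableTopology Δ]
    (P Q : Measure Δ) [IsProbabilityMeasure P] [IsProbabilityMeasure Q]
    (μt R : ℝ) (hμt : 0 ≤ μt) (hR : 0 < R)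
    (hW : wasserstein1 P Q ≤ ENNReal.ofReal μt)
    (V : Set Δ) (hV : MeasurableSet V)
    (hVR : MeasurableSet {δ : Δ | ∃ δ', dist δ δ' ≤ R ∧ δ' ∈ V})
    (VA : ENNReal) (hVA : VA = P {δ : Δ | ∃ δ', dist δ δ' ≤ R ∧ δ' ∈ V}) :
    Q V ≤ VA + ENNReal.ofReal (μt / R) :=
  ood_violation_bound_general P Q μt R hR hW V hV hVR VA hVA
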